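/- Let F: ℝ → ℝ ∪ {+∞} be proper, convex, lower semicontinuous with F ≥ 0, F(0) = 0 and F(s) = +∞ for |s| > 1, and let F_λ be its Moreau–Yosida regularization. Then for every fixed λ* ∈ (0,1] there exists C* > 0 such that F_λ(s) ≥ s²/(4λ*) − C* for all s ∈ ℝ and all λ ∈ (0, λ*]. -/
import Mathlib


open MeasureTheory ENNReal Set Filter Topology

noncomputable section

/-- The Moreau–Yosida regularization (Moreau envelope) of a nonnegative extended-real
function `F`:  `F_λ(s) = inf_r { (s − r)² / (2λ) + F(r) }`, real-valued. -/
def moreauEnv (F : ℝ → ℝ≥0∞) (lam : ℝ) (s : ℝ) : ℝ :=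
  (⨅ r : ℝ, ENNReal.ofReal ((s - r) ^ 2 / (2 * lam)) + F r).toReal

/-- Let `F : ℝ → ℝ ∪ {+∞}` be proper, convex, lower semicontinuous with `F ≥ 0`,
`F(0) = 0`, and `F(s) = +∞` for `|s| > 1`.  Then for every fixed `λ* ∈ (0,1]` there
exists `C* > 0` such that `F_λ(s) ≥ s²/(4λ*) − C*` for all `s ∈ ℝ` and all
`λ ∈ (0, λ*]`. -/
theorem moreau_envelope_quadratic_lower_bound
    (F : ℝ → ℝ≥0∞)
    (hproper : ∃ x, F x ≠ ⊤)
    (hlsc : LowerSemicontinuous F)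
    (hconv : ∀ x y : ℝ, ∀ t : ℝ, 0 ≤ t → t ≤ 1 →
      F (t * x + (1 - t) * y) ≤ ENNReal.ofReal t * F x + ENNReal.ofReal (1 - t) * F y)
    (h0 : F 0 = 0)
    (hsing : ∀ s : ℝ, 1 < |s| → F s = ⊤) :
    ∀ lamStar : ℝ, 0 < lamStar → lamStar ≤ 1 →
      ∃ CStar > (0 : ℝ), ∀ lam : ℝ, 0 < lam → lam ≤ lamStar →
        ∀ s : ℝ, s ^ 2 / (4 * lamStar) - CStar ≤ moreauEnv F lam s := by
  intro lamStar hl hl1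
  refine ⟨1 / (2 * lamStar), by positivity, ?_⟩
  intro lam hlam hle s
  set I := ⨅ r : ℝ, ENNReal.ofReal ((s - r) ^ 2 / (2 * lam)) + F r with hI
  have hI_ne_top : I ≠ ⊤ := by
    refine ne_top_of_le_ne_top ?_ (iInf_le _ 0)
    rw [h0, add_zero]
    exact ENNReal.ofReal_ne_top
  have hlb : ENNReal.ofReal ((s ^ 2 / 2 - 1) / (2 * lamStar)) ≤ I := by
    refine le_iInf fun r => ?_
    by_cases hr : |r| ≤ 1
    · refine le_trans ?_ le_self_add
      apply ENNReal.ofReal_le_ofReal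
      obtain ⟨hr1, hr2⟩ := abs_le.mp hr
      have h1 : s ^ 2 / 2 - 1 ≤ (s - r) ^ 2 := by nlinarith [sq_nonneg (s - 2 * r)]
      rcases le_or_gt (s ^ 2 / 2 - 1) 0 with h | h
      · exact le_trans (div_nonpos_of_nonpos_of_nonneg h (by linarith)) (by positivity)
      · calc (s ^ 2 / 2 - 1) / (2 * lamStar) ≤ (s - r) ^ 2 / (2 * lamStar) := by
              gcongr
          _ ≤ (s - r) ^ 2 / (2 * lam) := by
              apply div_le_div_of_nonneg_left (sq_nonneg _) (by linarith) (by linarith)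
    · rw [hsing r (lt_of_not_ge hr)]
      simp
  have hmono := ENNReal.toReal_mono hI_ne_top hlb
  have hx : (s ^ 2 / 2 - 1) / (2 * lamStar) ≤
      (ENNReal.ofReal ((s ^ 2 / 2 - 1) / (2 * lamStar))).toReal := by
    rcases le_or_gt 0 ((s ^ 2 / 2 - 1) / (2 * lamStar)) with h | h
    · rw [ENNReal.toReal_ofReal h]
    · exact h.le.trans ENNReal.toReal_nonneg
  have heq : s ^ 2 / (4 * lamStar) - 1 / (2 * lamStar) = (s ^ 2 / 2 - 1) / (2 * lamStar) := by
    field_simp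
    ring
  rw [moreauEnv, ← hI, heq]
  exact hx.trans hmono
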